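/- If φ : u_n → u_n is an injective Lie algebra homomorphism, then for each i = 1,...,n there exist λᵢ ∈ K* and uᵢ ∈ u_{n,i+1} such that φ(∂ᵢ) = λᵢ∂ᵢ + uᵢ. In particular φ(∂ₙ) = λₙ∂ₙ. -/

import Mathlib

open MvPolynomial

noncomputable section

/-- The polynomial algebra `Pₙ = K[x₀,…,x_{n-1}]`. -/
abbrev Pn (K : Type) [Field K] (n : ℕ) : Type := MvPolynomial (Fin n) K

/-- The Lie algebra of `K`-derivations of `Pₙ`. -/
abbrev DerPn (K : Type) [Field K] (n : ℕ) : Type :=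
  Derivation K (Pn K n) (Pn K n)

/-- The subalgebra `P_j = K[x₀,…,x_{j-1}]` of `Pₙ` (0-indexed: variables with index `< j`). -/
def Psub (K : Type) [Field K] (n j : ℕ) : Subalgebra K (Pn K n) :=
  MvPolynomial.supported K {k : Fin n | (k : ℕ) < j}

/-- The subspace `u_{n,i} = Σ_{j=i}^n P_{j-1}∂_j` (1-indexed `i`; `U K n 1 = u_n`).
A derivation `D` lies in it iff `D(x_j) ∈ P_{j-1}` for all `j` and `D(x_j) = 0` for `j < i`
(0-indexed: `D (X j) = 0` when `(j:ℕ)+1 < i`). -/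
def U (K : Type) [Field K] (n i : ℕ) : Submodule K (DerPn K n) where
  carrier := {D | ∀ j : Fin n, D (X j) ∈ Psub K n j ∧ ((j : ℕ) + 1 < i → D (X j) = 0)}
  add_mem' := by
    intro a b ha hb j
    refine ⟨?_, fun h => ?_⟩
    · simpa using Subalgebra.add_mem _ (ha j).1 (hb j).1
    · simp [(ha j).2 h, (hb j).2 h]
  zero_mem' := by
    intro j
    refine ⟨by simpa using (Psub K n j).zero_mem, fun _ => rfl⟩
  smul_mem' := by
    intro c a ha j
    refine ⟨?_, fun h => ?_⟩
    · simpa using Subalgebra.smul_mem _ (ha j).1 c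
    · simp [(ha j).2 h]

/-- The span of all brackets `⁅a,b⁆` with `a ∈ A`, `b ∈ B`. -/
def lieSpan (K : Type) [Field K] (n : ℕ) (A B : Submodule K (DerPn K n)) :
    Submodule K (DerPn K n) :=
  Submodule.span K {x | ∃ a ∈ A, ∃ b ∈ B, x = ⁅a, b⁆}

/-- The derived series of a subspace `G`: `G_{(0)} = G`, `G_{(i+1)} = [G_{(i)}, G_{(i)}]`. -/
def derivedSub (K : Type) [Field K] (n : ℕ) (G : Submodule K (DerPn K n)) : ℕ → Submodule K (DerPn K n)
  | 0 => G
  | i + 1 => lieSpan K n (derivedSub K n G i) (derivedSub K n G i)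

/-!
In the paper's 1-based indexing: the derived series of `u_n` satisfies `u_n^{(k)} ⊆ u_{n,k+1}`, while every `x^α ∂_j` with
`x^α ∈ P_{j-1}` lies in `u_n^{(j-1)}`, because `x^α ∂_j = [∂_k, x^{α+e_k}/(α_k+1) ∂_j]` for `k < j`.
Since `φ` preserves the derived series, `φ(∂_i) = a ∂_i + (an element of u_{n,i+1})` with
`a ∈ P_{i-1}`. By induction on `i`, `φ(∂_j) = λ_j ∂_j + u_j` for `j < i`, and evaluating
`[φ(∂_j), φ(∂_i)] = 0` at `x_i` gives `(λ_j ∂_j + u_j)(a) = 0` (the other term dies because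
`φ(∂_i)` kills `P_{i-1} ∋ φ(∂_j)(x_i)`); going down from `j = i-1` this removes the variables of `a`
one at a time, so `a` is a constant. If `a = 0`, the relations
`∂_{k+1} = [∂_k, x_k ∂_{k+1}]` with `x_k ∂_{k+1} ∈ u_n^{(k)}` push `φ(∂_i) ∈ u_{n,i+1}` up to
`φ(∂_n) ∈ u_{n,n+1} = 0`, contradicting injectivity.
-/

section MvPolynomial

variable {σ R : Type*} [CommRing R]

lemma MvPolynomial.lie_pderiv_smul_pderiv (i j : σ) (f : MvPolynomial σ R) :
    ⁅pderiv (R := R) i, f • pderiv (R := R) j⁆ = pderiv i f • pderiv j := by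
  classical
  refine derivation_ext fun m => ?_
  simp only [Derivation.commutator_apply, Derivation.smul_apply, smul_eq_mul, pderiv_X,
    Pi.single_apply]
  split_ifs <;> simp

lemma MvPolynomial.lie_pderiv_pderiv (i j : σ) : ⁅pderiv (R := R) i, pderiv (R := R) j⁆ = 0 := by
  simpa [pderiv_one] using lie_pderiv_smul_pderiv (R := R) i j 1

lemma MvPolynomial.notMem_vars_of_pderiv_eq_zero [IsDomain R] [CharZero R] {i : σ}
    {f : MvPolynomial σ R} (h : pderiv i f = 0) : i ∉ f.vars := by
  intro hi
  obtain ⟨α, hα, hiα⟩ := (mem_vars_iff_mem_support i).1 hi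
  have hα₁ : Finsupp.single i 1 ≤ α :=
    Finsupp.single_le_iff.2 (Nat.one_le_iff_ne_zero.2 (Finsupp.mem_support_iff.1 hiα))
  have hcoeff := coeff_pderiv (i := i) f (α - Finsupp.single i 1)
  rw [h, coeff_zero, tsub_add_cancel_of_le hα₁] at hcoeff
  exact mul_ne_zero (mem_support_iff.1 hα) (Nat.cast_add_one_ne_zero _) hcoeff.symm

lemma MvPolynomial.pderiv_monomial_add_single {K : Type*} [Field K] [CharZero K] (i : σ)
    (α : σ →₀ ℕ) (c : K) :
    pderiv i (monomial (α + Finsupp.single i 1) (c / ((α i : K) + 1))) = monomial α c := by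
  rw [pderiv_monomial, add_tsub_cancel_right]
  congr 1
  simp only [Finsupp.add_apply, Finsupp.single_eq_same, Nat.cast_add, Nat.cast_one]
  exact div_mul_cancel₀ _ (Nat.cast_add_one_ne_zero _)

end MvPolynomial

section Triangular

variable {K : Type} [Field K] {n : ℕ}

lemma Psub_zero : Psub K n 0 = ⊥ := by
  simp [Psub, supported_empty]

lemma Psub_mono {j j' : ℕ} (h : j ≤ j') : Psub K n j ≤ Psub K n j' :=
  supported_mono fun _ hk => lt_of_lt_of_le hk h

lemma X_mem_Psub {k : Fin n} {j : ℕ} (h : (k : ℕ) < j) : (X k : Pn K n) ∈ Psub K n j :=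
  X_mem_supported.2 h

lemma monomial_mem_Psub {α : Fin n →₀ ℕ} {j : ℕ} (hα : ∀ m, α m ≠ 0 → (m : ℕ) < j) (c : K) :
    monomial α c ∈ Psub K n j := by
  by_cases hc : c = 0
  · simp [hc]
  · rw [Psub, mem_supported, vars_monomial hc]
    exact fun m hm => hα m (Finsupp.mem_support_iff.1 hm)

lemma U_le_one (i : ℕ) : U K n i ≤ U K n 1 :=
  fun _ hD j => ⟨(hD j).1, fun h => absurd h (by omega)⟩

lemma map_eq_zero_of_mem_U {D : DerPn K n} {a k : ℕ} (hD : D ∈ U K n a) {p : Pn K n}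
    (hp : p ∈ Psub K n k) (hk : k < a) : D p = 0 :=
  derivation_eqOn_supported (D₂ := 0) (fun m hm => (hD m).2 (by simp at hm; omega)) hp

lemma map_mem_Psub {D : DerPn K n} (hD : D ∈ U K n 1) {j : ℕ} {p : Pn K n}
    (hp : p ∈ Psub K n j) : D p ∈ Psub K n j := by
  have hadj : Psub K n j = Algebra.adjoin K (X '' {k : Fin n | (k : ℕ) < j}) :=
    supported_eq_adjoin_X _
  rw [hadj] at hp ⊢
  induction hp using Algebra.adjoin_induction with
  | mem _ hx =>
    obtain ⟨k, hk, rfl⟩ := hx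
    exact hadj ▸ Psub_mono hk.le (hD k).1
  | algebraMap r => simp
  | add _ _ _ _ hx hy => simpa using add_mem hx hy
  | mul x y hx' hy' hx hy =>
    rw [Derivation.leibniz, smul_eq_mul, smul_eq_mul]
    exact add_mem (mul_mem hx' hy) (mul_mem hy' hx)

lemma lie_mem_U {a : ℕ} {D₁ D₂ : DerPn K n} (h₁ : D₁ ∈ U K n a) (h₂ : D₂ ∈ U K n a) :
    ⁅D₁, D₂⁆ ∈ U K n (a + 1) := by
  intro j
  rw [Derivation.commutator_apply]
  refine ⟨sub_mem (map_mem_Psub (U_le_one a h₁) (h₂ j).1) (map_mem_Psub (U_le_one a h₂) (h₁ j).1),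
    fun hj => ?_⟩
  rw [map_eq_zero_of_mem_U h₁ (h₂ j).1 (by omega), map_eq_zero_of_mem_U h₂ (h₁ j).1 (by omega),
    sub_zero]

lemma eq_zero_of_mem_U_succ {D : DerPn K n} (hD : D ∈ U K n (n + 1)) : D = 0 :=
  derivation_ext fun j => (hD j).2 (by omega)

lemma smul_pderiv_mem_U_one {p : Pn K n} {j : Fin n} (hp : p ∈ Psub K n j) :
    p • pderiv j ∈ U K n 1 := by
  classical
  refine fun m => ⟨?_, fun h => absurd h (by omega)⟩
  rw [Derivation.smul_apply, pderiv_X, smul_eq_mul]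
  by_cases h : j = m
  · subst h; simpa using hp
  · simp [Ne.symm h]

lemma pderiv_mem_U_one (j : Fin n) : pderiv j ∈ U K n 1 := by
  simpa using smul_pderiv_mem_U_one (K := K) (one_mem (Psub K n j))

lemma sub_smul_pderiv_mem_U {D : DerPn K n} {i : Fin n} (hD : D ∈ U K n (i + 1)) {c : K}
    (hc : D (X i) = C c) : D - c • pderiv i ∈ U K n (i + 2) := by
  intro m
  rw [Derivation.sub_apply, Derivation.smul_apply]
  refine ⟨sub_mem (hD m).1 (Subalgebra.smul_mem _ (pderiv_mem_U_one i m).1 c), fun hm => ?_⟩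
  by_cases hmi : m = i
  · subst hmi
    rw [hc, pderiv_X_self, smul_eq_C_mul, mul_one, sub_self]
  · rw [(hD m).2 (by omega), pderiv_X_of_ne hmi, smul_zero, sub_zero]

variable [CharZero K]

lemma mem_Psub_of_pderiv_eq_zero {k : Fin n} {p : Pn K n} (hp : p ∈ Psub K n (k + 1))
    (h : pderiv k p = 0) : p ∈ Psub K n k := by
  rw [Psub, mem_supported] at hp ⊢
  intro m hm
  have hmk : m ≠ k := fun hmk => notMem_vars_of_pderiv_eq_zero h (hmk ▸ hm)
  have hm' : (m : ℕ) < k + 1 := hp hm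
  exact lt_of_le_of_ne (Nat.lt_succ_iff.1 hm') (Fin.val_ne_of_ne hmk)

lemma exists_eq_C_of_annihilated {t : ℕ} (ht : t ≤ n) {a : Pn K n} (ha : a ∈ Psub K n t)
    (h : ∀ j : Fin n, (j : ℕ) < t →
      ∃ lam ≠ (0 : K), ∃ u ∈ U K n (j + 2), (lam • pderiv j + u : DerPn K n) a = 0) :
    ∃ c, a = C c := by
  induction t with
  | zero =>
    rw [Psub_zero, Algebra.mem_bot] at ha
    obtain ⟨c, rfl⟩ := ha
    exact ⟨c, rfl⟩
  | succ t ih =>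
    obtain ⟨lam, hlam, u, hu, hkill⟩ := h ⟨t, ht⟩ (Nat.lt_succ_self t)
    have hua : u a = 0 := map_eq_zero_of_mem_U hu ha (by simp)
    rw [Derivation.add_apply, Derivation.smul_apply, hua, add_zero,
      smul_eq_zero_iff_right hlam] at hkill
    exact ih (Nat.le_of_succ_le ht) (mem_Psub_of_pderiv_eq_zero (k := ⟨t, ht⟩) ha hkill)
      fun j hj => h j (Nat.lt_succ_of_lt hj)

end Triangular

section LieAlgebra

open LieAlgebra

variable {K : Type} [Field K] {n : ℕ}

variable (K n) in
def un : LieSubalgebra K (DerPn K n) :=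
  { U K n 1 with lie_mem' := fun h₁ h₂ => U_le_one 2 (lie_mem_U h₁ h₂) }

def pderivUn (j : Fin n) : un K n :=
  ⟨pderiv j, pderiv_mem_U_one j⟩

lemma derivedSeries_le_U (k : ℕ) {x : un K n} (hx : x ∈ derivedSeries K (un K n) k) :
    (x : DerPn K n) ∈ U K n (k + 1) := by
  induction k generalizing x with
  | zero => exact x.2
  | succ k ih =>
    rw [derivedSeries_def, derivedSeriesOfIdeal_succ, ← LieSubmodule.mem_toSubmodule,
      LieSubmodule.lieIdeal_oper_eq_linear_span'] at hx
    induction hx using Submodule.span_induction with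
    | mem _ hy =>
      obtain ⟨a, ha, b, hb, rfl⟩ := hy
      exact lie_mem_U (ih ha) (ih hb)
    | zero => exact zero_mem _
    | add _ _ _ _ h₁ h₂ => exact add_mem h₁ h₂
    | smul c _ _ h => exact Submodule.smul_mem _ c h

lemma map_mem_U_of_mem_derivedSeries (φ : un K n →ₗ⁅K⁆ un K n) {k : ℕ} {x : un K n}
    (hx : x ∈ derivedSeries K (un K n) k) : (φ x : DerPn K n) ∈ U K n (k + 1) :=
  derivedSeries_le_U k (LieIdeal.derivedSeries_map_le k (LieIdeal.mem_map hx))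

variable [CharZero K]

lemma monomial_smul_pderiv_mem_derivedSeries {k : ℕ} {j : Fin n} (hkj : k ≤ j)
    {α : Fin n →₀ ℕ} (hα : ∀ m, α m ≠ 0 → (m : ℕ) < j) (c : K) {x : un K n}
    (hx : (x : DerPn K n) = monomial α c • pderiv j) : x ∈ derivedSeries K (un K n) k := by
  induction k generalizing j α c x with
  | zero => simp
  | succ k ih =>
    set i : Fin n := ⟨k, by omega⟩
    have hα' : ∀ m, (α + Finsupp.single i 1 : Fin n →₀ ℕ) m ≠ 0 → (m : ℕ) < j := by
      intro m hm
      by_cases hmi : m = i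
      · simp only [hmi, i]; omega
      · exact hα m (by simpa [Finsupp.single_apply, Ne.symm hmi] using hm)
    let z : un K n := ⟨monomial (α + Finsupp.single i 1) (c / ((α i : K) + 1)) • pderiv j,
      smul_pderiv_mem_U_one (monomial_mem_Psub hα' _)⟩
    have hxz : x = ⁅pderivUn i, z⁆ := Subtype.ext <| by
      rw [hx, LieSubalgebra.coe_bracket, pderivUn, lie_pderiv_smul_pderiv,
        pderiv_monomial_add_single]
    rw [hxz, derivedSeries_def, derivedSeriesOfIdeal_succ]
    refine LieSubmodule.lie_mem_lie (ih (j := i) le_rfl (α := 0) (by simp) 1 ?_)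
      (ih (by omega) hα' _ rfl)
    simp [pderivUn]

lemma pderivUn_mem_derivedSeries (j : Fin n) : pderivUn j ∈ derivedSeries K (un K n) j :=
  monomial_smul_pderiv_mem_derivedSeries le_rfl (α := 0) (by simp) 1 (by simp [pderivUn])

lemma X_smul_pderiv_mem_derivedSeries {k j : Fin n} (hkj : k < j) {x : un K n}
    (hx : (x : DerPn K n) = (X k : Pn K n) • pderiv j) : x ∈ derivedSeries K (un K n) j :=
  monomial_smul_pderiv_mem_derivedSeries le_rfl (α := Finsupp.single k 1)
    (fun m hm => by obtain ⟨rfl, -⟩ := Finsupp.single_apply_ne_zero.1 hm; exact hkj) 1 hx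

variable (φ : un K n →ₗ⁅K⁆ un K n)

lemma map_pderivUn_mem_U (i : Fin n) : (φ (pderivUn i) : DerPn K n) ∈ U K n (i + 1) :=
  map_mem_U_of_mem_derivedSeries φ (pderivUn_mem_derivedSeries i)

lemma map_pderivUn_apply_X_eq_C (i : Fin n)
    (IH : ∀ j < i, ∃ lam ≠ (0 : K), ∃ u ∈ U K n (j + 2),
      (φ (pderivUn j) : DerPn K n) = lam • pderiv j + u) :
    ∃ c, (φ (pderivUn i) : DerPn K n) (X i) = C c := by
  have hi := map_pderivUn_mem_U φ i
  refine exists_eq_C_of_annihilated i.is_lt.le (hi i).1 fun j hj => ?_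
  obtain ⟨lam, hlam, u, hu, hφj⟩ := IH j hj
  refine ⟨lam, hlam, u, hu, ?_⟩
  have hcomm : ⁅(φ (pderivUn j) : DerPn K n), (φ (pderivUn i) : DerPn K n)⁆ = 0 := by
    rw [← LieSubalgebra.coe_bracket, ← φ.map_lie,
      show ⁅pderivUn j, pderivUn i⁆ = (0 : un K n) from Subtype.ext (lie_pderiv_pderiv j i),
      map_zero, ZeroMemClass.coe_zero]
  have hXi := congrArg (· (X i)) hcomm
  simp only [Derivation.commutator_apply, Derivation.zero_apply] at hXi
  rwa [map_eq_zero_of_mem_U hi ((φ (pderivUn j)).2 i).1 (Nat.lt_succ_self i), sub_zero,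
    hφj] at hXi

lemma map_pderivUn_succ_mem_U {k : ℕ} (hk : k + 1 < n)
    (h : (φ (pderivUn ⟨k, by omega⟩) : DerPn K n) ∈ U K n (k + 2)) :
    (φ (pderivUn ⟨k + 1, hk⟩) : DerPn K n) ∈ U K n (k + 3) := by
  let k' : Fin n := ⟨k, by omega⟩
  let e : un K n := ⟨(X k' : Pn K n) • pderiv ⟨k + 1, hk⟩,
    smul_pderiv_mem_U_one (X_mem_Psub (Nat.lt_succ_self k))⟩
  have he : pderivUn ⟨k + 1, hk⟩ = ⁅pderivUn k', e⁆ := Subtype.ext <| by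
    rw [LieSubalgebra.coe_bracket]
    simp only [pderivUn, e]
    rw [lie_pderiv_smul_pderiv, pderiv_X_self, one_smul]
  have hφe : (φ e : DerPn K n) ∈ U K n (k + 2) :=
    map_mem_U_of_mem_derivedSeries φ
      (X_smul_pderiv_mem_derivedSeries (j := ⟨k + 1, hk⟩) (Nat.lt_succ_self k) rfl)
  rw [he, LieHom.map_lie, LieSubalgebra.coe_bracket]
  exact lie_mem_U h hφe

lemma map_pderivUn_notMem_U (hφ : Function.Injective φ) (i : Fin n) :
    (φ (pderivUn i) : DerPn K n) ∉ U K n (i + 2) := by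
  intro hi
  have hclimb : ∀ k : ℕ, (i : ℕ) ≤ k → ∀ hk : k < n,
      (φ (pderivUn ⟨k, hk⟩) : DerPn K n) ∈ U K n (k + 2) := by
    intro k hik
    induction k, hik using Nat.le_induction with
    | base => exact fun _ => hi
    | succ k _ ih => exact fun hk => map_pderivUn_succ_mem_U φ hk (ih (by omega))
  have hin := i.is_lt
  have htop := hclimb (n - 1) (by omega) (by omega)
  rw [show n - 1 + 2 = n + 1 by omega] at htop
  have h0 : pderivUn (⟨n - 1, by omega⟩ : Fin n) = 0 :=
    hφ (by rw [map_zero]; exact Subtype.ext (eq_zero_of_mem_U_succ htop))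
  simpa [pderivUn] using congrArg (fun x : un K n => (x : DerPn K n) (X ⟨n - 1, by omega⟩)) h0

theorem map_pderivUn_eq (hφ : Function.Injective φ) (i : Fin n) :
    ∃ lam ≠ (0 : K), ∃ u ∈ U K n (i + 2), (φ (pderivUn i) : DerPn K n) = lam • pderiv i + u := by
  induction i using WellFoundedLT.induction with
  | _ i IH =>
  obtain ⟨c, hc⟩ := map_pderivUn_apply_X_eq_C φ i IH
  have hsub := sub_smul_pderiv_mem_U (map_pderivUn_mem_U φ i) hc
  refine ⟨c, fun hc0 => map_pderivUn_notMem_U φ hφ i ?_, _, hsub, by abel⟩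
  simpa [hc0] using hsub

end LieAlgebra

theorem phi_di_general (K : Type) [Field K] [CharZero K] (n : ℕ)
    (L : LieSubalgebra K (DerPn K n)) (hL : L.toSubmodule = U K n 1)
    (φ : L →ₗ⁅K⁆ L) (hφ : Function.Injective φ) :
    ∀ (i : Fin n) (d : L), (d : DerPn K n) = pderiv i →
      ∃ lam : K, lam ≠ 0 ∧ ∃ u : DerPn K n, u ∈ U K n ((i : ℕ) + 2) ∧
        ((φ d : L) : DerPn K n) = lam • pderiv i + u := by
  obtain rfl : L = un K n :=
    LieSubalgebra.toSubmodule_injective (show L.toSubmodule = (un K n).toSubmodule from hL)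
  intro i d hd
  obtain rfl : d = pderivUn i := Subtype.ext hd
  exact map_pderivUn_eq φ hφ i

/-- if `φ : u_n → u_n` is an injective Lie algebra homomorphism then for
each `i`, `φ(∂ᵢ) = λᵢ∂ᵢ + uᵢ` with `λᵢ ∈ K*` and `uᵢ ∈ u_{n,i+1}` (0-indexed: `U K n ((i:ℕ)+2)`). -/
theorem phi_di (K : Type) [Field K] [CharZero K] (n : ℕ) (hn : 2 ≤ n)
    (L : LieSubalgebra K (DerPn K n)) (hL : L.toSubmodule = U K n 1)
    (φ : L →ₗ⁅K⁆ L) (hφ : Function.Injective φ) :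
    ∀ (i : Fin n) (d : L), (d : DerPn K n) = pderiv i →
      ∃ lam : K, lam ≠ 0 ∧ ∃ u : DerPn K n, u ∈ U K n ((i : ℕ) + 2) ∧
        ((φ d : L) : DerPn K n) = lam • pderiv i + u :=
  phi_di_general K n L hL φ hφ
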